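/- For every unsigned permutation π of size n, all positive weights w_ρ and w_τ, and every rearrangement model M ∈ {M1, M2, M3, M4, M5, M6} (with unsigned operations), the weighted sorting distance satisfies d^w_M(π) ≥ min{w_ρ/2, w_τ/3} · b(π), where b(π) is the number of unsigned-reversal breakpoints of π. -/

import Mathlib

/-- The four kinds of rearrangement operations considered:
reversals, transpositions, inverse transpositions and revrevs. -/
inductive RearrOp : Type
  | rev
  | transp
  | invtransp
  | revrev
deriving DecidableEq

/-- `π` is (the extended version of) a signed permutation of size `n`:
`π 0 = +0`, `π (n+1) = +(n+1)`, and on positions `1, …, n` the values have pairwise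
distinct absolute values lying in `{1, …, n}`. -/
def IsSPerm (n : ℕ) (π : ℕ → ℤ) : Prop :=
  π 0 = 0 ∧ π (n + 1) = (n : ℤ) + 1 ∧
  (∀ i : ℕ, 1 ≤ i → i ≤ n → 1 ≤ |π i| ∧ |π i| ≤ (n : ℤ)) ∧
  (∀ i j : ℕ, 1 ≤ i → i ≤ n → 1 ≤ j → j ≤ n → |π i| = |π j| → i = j)

/-- `π` is (the extended version of) an unsigned permutation of size `n`. -/
def IsUPerm (n : ℕ) (π : ℕ → ℕ) : Prop :=
  π 0 = 0 ∧ π (n + 1) = n + 1 ∧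
  (∀ i : ℕ, 1 ≤ i → i ≤ n → 1 ≤ π i ∧ π i ≤ n) ∧
  (∀ i j : ℕ, 1 ≤ i → i ≤ n → 1 ≤ j → j ≤ n → π i = π j → i = j)

/-- Signed reversal `ρ(i,j)`, `1 ≤ i ≤ j ≤ n`: replaces `(π_i … π_j)` by `(−π_j … −π_i)`. -/
def SRev (n : ℕ) (π π' : ℕ → ℤ) : Prop :=
  ∃ i j : ℕ, 1 ≤ i ∧ i ≤ j ∧ j ≤ n ∧
    (∀ p : ℕ, i ≤ p → p ≤ j → π' p = - π (i + j - p)) ∧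
    (∀ p : ℕ, p < i ∨ j < p → π' p = π p)

/-- Transposition `τ(i,j,k)`, `1 ≤ i < j < k ≤ n+1`: exchanges the adjacent segments
`(π_i … π_{j−1})` and `(π_j … π_{k−1})`. -/
def STransp (n : ℕ) (π π' : ℕ → ℤ) : Prop :=
  ∃ i j k : ℕ, 1 ≤ i ∧ i < j ∧ j < k ∧ k ≤ n + 1 ∧
    (∀ p : ℕ, i ≤ p → p < i + (k - j) → π' p = π (p + (j - i))) ∧
    (∀ p : ℕ, i + (k - j) ≤ p → p < k → π' p = π (p - (k - j))) ∧
    (∀ p : ℕ, p < i ∨ k ≤ p → π' p = π p)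

/-- Signed inverse transposition (type 1 or type 2): exchanges the two adjacent segments
`(π_i … π_{j−1})` and `(π_j … π_{k−1})` and additionally reverses (and negates) one of them. -/
def SInvTransp (n : ℕ) (π π' : ℕ → ℤ) : Prop :=
  ∃ i j k : ℕ, 1 ≤ i ∧ i < j ∧ j < k ∧ k ≤ n + 1 ∧
    (((∀ p : ℕ, i ≤ p → p < i + (k - j) → π' p = π (p + (j - i))) ∧
      (∀ p : ℕ, i + (k - j) ≤ p → p < k → π' p = - π (i + k - 1 - p))) ∨
     ((∀ p : ℕ, i ≤ p → p < i + (k - j) → π' p = - π (i + k - 1 - p)) ∧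
      (∀ p : ℕ, i + (k - j) ≤ p → p < k → π' p = π (p - (k - j))))) ∧
    (∀ p : ℕ, p < i ∨ k ≤ p → π' p = π p)

/-- Signed revrev `ρρ(i,j,k)`: reverses (and negates) each of the two adjacent segments
`(π_i … π_{j−1})` and `(π_j … π_{k−1})` in place, without exchanging them. -/
def SRevRev (n : ℕ) (π π' : ℕ → ℤ) : Prop :=
  ∃ i j k : ℕ, 1 ≤ i ∧ i < j ∧ j < k ∧ k ≤ n + 1 ∧
    (∀ p : ℕ, i ≤ p → p < j → π' p = - π (i + j - 1 - p)) ∧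
    (∀ p : ℕ, j ≤ p → p < k → π' p = - π (j + k - 1 - p)) ∧
    (∀ p : ℕ, p < i ∨ k ≤ p → π' p = π p)

/-- Unsigned reversal `ρ(i,j)`. -/
def URev (n : ℕ) (π π' : ℕ → ℕ) : Prop :=
  ∃ i j : ℕ, 1 ≤ i ∧ i ≤ j ∧ j ≤ n ∧
    (∀ p : ℕ, i ≤ p → p ≤ j → π' p = π (i + j - p)) ∧
    (∀ p : ℕ, p < i ∨ j < p → π' p = π p)

/-- Unsigned transposition `τ(i,j,k)`. -/
def UTransp (n : ℕ) (π π' : ℕ → ℕ) : Prop :=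
  ∃ i j k : ℕ, 1 ≤ i ∧ i < j ∧ j < k ∧ k ≤ n + 1 ∧
    (∀ p : ℕ, i ≤ p → p < i + (k - j) → π' p = π (p + (j - i))) ∧
    (∀ p : ℕ, i + (k - j) ≤ p → p < k → π' p = π (p - (k - j))) ∧
    (∀ p : ℕ, p < i ∨ k ≤ p → π' p = π p)

/-- Unsigned inverse transposition (type 1 or type 2). -/
def UInvTransp (n : ℕ) (π π' : ℕ → ℕ) : Prop :=
  ∃ i j k : ℕ, 1 ≤ i ∧ i < j ∧ j < k ∧ k ≤ n + 1 ∧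
    (((∀ p : ℕ, i ≤ p → p < i + (k - j) → π' p = π (p + (j - i))) ∧
      (∀ p : ℕ, i + (k - j) ≤ p → p < k → π' p = π (i + k - 1 - p))) ∨
     ((∀ p : ℕ, i ≤ p → p < i + (k - j) → π' p = π (i + k - 1 - p)) ∧
      (∀ p : ℕ, i + (k - j) ≤ p → p < k → π' p = π (p - (k - j))))) ∧
    (∀ p : ℕ, p < i ∨ k ≤ p → π' p = π p)

/-- Unsigned revrev `ρρ(i,j,k)`. -/
def URevRev (n : ℕ) (π π' : ℕ → ℕ) : Prop :=
  ∃ i j k : ℕ, 1 ≤ i ∧ i < j ∧ j < k ∧ k ≤ n + 1 ∧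
    (∀ p : ℕ, i ≤ p → p < j → π' p = π (i + j - 1 - p)) ∧
    (∀ p : ℕ, j ≤ p → p < k → π' p = π (j + k - 1 - p)) ∧
    (∀ p : ℕ, p < i ∨ k ≤ p → π' p = π p)

def sOpRel (n : ℕ) : RearrOp → (ℕ → ℤ) → (ℕ → ℤ) → Prop
  | RearrOp.rev => SRev n
  | RearrOp.transp => STransp n
  | RearrOp.invtransp => SInvTransp n
  | RearrOp.revrev => SRevRev n

def uOpRel (n : ℕ) : RearrOp → (ℕ → ℕ) → (ℕ → ℕ) → Prop
  | RearrOp.rev => URev n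
  | RearrOp.transp => UTransp n
  | RearrOp.invtransp => UInvTransp n
  | RearrOp.revrev => URevRev n

/-- The list of operations `l` transforms the signed permutation `π` into the identity. -/
def SSorts (n : ℕ) : List RearrOp → (ℕ → ℤ) → Prop
  | [], π => ∀ p : ℕ, p ≤ n + 1 → π p = (p : ℤ)
  | op :: l, π => ∃ π' : ℕ → ℤ, sOpRel n op π π' ∧ SSorts n l π'

/-- The list of operations `l` transforms the unsigned permutation `π` into the identity. -/
def USorts (n : ℕ) : List RearrOp → (ℕ → ℕ) → Prop
  | [], π => ∀ p : ℕ, p ≤ n + 1 → π p = p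
  | op :: l, π => ∃ π' : ℕ → ℕ, uOpRel n op π π' ∧ USorts n l π'

/-- A sequence of `s` (unsigned) transpositions transforms `π` into the identity. -/
def UTranspSorts (n : ℕ) : ℕ → (ℕ → ℕ) → Prop
  | 0, π => ∀ p : ℕ, p ≤ n + 1 → π p = p
  | s + 1, π => ∃ π' : ℕ → ℕ, UTransp n π π' ∧ UTranspSorts n s π'

/-- The cost of an operation: `wr` for a reversal, `wt` for a transposition,
inverse transposition or revrev. -/
noncomputable def opCost (wr wt : ℝ) (op : RearrOp) : ENNReal :=
  if op = RearrOp.rev then ENNReal.ofReal wr else ENNReal.ofReal wt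

/-- The total cost of a sequence of operations. -/
noncomputable def seqCost (wr wt : ℝ) (l : List RearrOp) : ENNReal :=
  (l.map (opCost wr wt)).sum

/-- The weighted distance `d^w_M(π)` for a signed permutation `π`: the minimum total cost
of a sequence of operations from the model `M` transforming `π` into the identity
(`∞` if no such sequence exists). -/
noncomputable def sWDist (n : ℕ) (M : Set RearrOp) (wr wt : ℝ) (π : ℕ → ℤ) : ENNReal :=
  sInf {c : ENNReal |
    ∃ l : List RearrOp, (∀ op ∈ l, op ∈ M) ∧ SSorts n l π ∧ c = seqCost wr wt l}

/-- The weighted distance `d^w_M(π)` for an unsigned permutation `π`. -/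
noncomputable def uWDist (n : ℕ) (M : Set RearrOp) (wr wt : ℝ) (π : ℕ → ℕ) : ENNReal :=
  sInf {c : ENNReal |
    ∃ l : List RearrOp, (∀ op ∈ l, op ∈ M) ∧ USorts n l π ∧ c = seqCost wr wt l}

/-- `b(π)`: number of (signed) breakpoints of the signed permutation `π`. -/
def bS (n : ℕ) (π : ℕ → ℤ) : ℕ :=
  ((Finset.range (n + 1)).filter (fun i => π (i + 1) - π i ≠ 1)).card

/-- `b(π)`: number of unsigned-reversal breakpoints, i.e. pairs with `|π_{i+1} − π_i| ≠ 1`. -/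
def bU (n : ℕ) (π : ℕ → ℕ) : ℕ :=
  ((Finset.range (n + 1)).filter
    (fun i => ¬ (π (i + 1) = π i + 1 ∨ π i = π (i + 1) + 1))).card

/-- `b_τ(π)`: number of transposition breakpoints, i.e. pairs with `π_{i+1} − π_i ≠ 1`. -/
def bTU (n : ℕ) (π : ℕ → ℕ) : ℕ :=
  ((Finset.range (n + 1)).filter (fun i => π (i + 1) ≠ π i + 1)).card

def M1 : Set RearrOp := {RearrOp.transp, RearrOp.invtransp}
def M2 : Set RearrOp := {RearrOp.rev, RearrOp.transp, RearrOp.invtransp}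
def M3 : Set RearrOp := {RearrOp.transp, RearrOp.revrev}
def M4 : Set RearrOp := {RearrOp.rev, RearrOp.transp, RearrOp.revrev}
def M5 : Set RearrOp := {RearrOp.transp, RearrOp.invtransp, RearrOp.revrev}
def M6 : Set RearrOp := {RearrOp.rev, RearrOp.transp, RearrOp.invtransp, RearrOp.revrev}

/-!
Each operation replaces `π` by `π ∘ σ`, where `σ` is a bijection of the positions
`{0, …, n + 1}` whose only breakpoints are the cut points of the moved segments: two for a
reversal, three for the other operations. Breakpoints are subadditive,
`b(π) ≤ b(π ∘ σ) + b(σ)`, because an adjacency of `π ∘ σ` at a position where `σ` is adjacent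
is an adjacency of `π` at `min (σ q) (σ (q + 1))`. Hence an operation of cost `w_ρ` (resp.
`w_τ`) removes at most `2` (resp. `3`) breakpoints, and summing along a sorting sequence ends at
the identity, which has none.
-/

abbrev Consecutive (a b : ℕ) : Prop := b = a + 1 ∨ a = b + 1

theorem Consecutive.symm {a b : ℕ} (h : Consecutive a b) : Consecutive b a := Or.symm h

def adjU (n : ℕ) (π : ℕ → ℕ) : Finset ℕ :=
  (Finset.range (n + 1)).filter (fun q => Consecutive (π q) (π (q + 1)))

theorem card_adjU_add_bU (n : ℕ) (π : ℕ → ℕ) : (adjU n π).card + bU n π = n + 1 := by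
  rw [adjU, bU, Finset.card_filter_add_card_filter_not, Finset.card_range]

theorem bU_congr {n : ℕ} {π π' : ℕ → ℕ} (h : ∀ p ≤ n + 1, π p = π' p) : bU n π = bU n π' := by
  unfold bU
  congr 1
  refine Finset.filter_congr fun q hq => ?_
  rw [Finset.mem_range] at hq
  rw [h q (by omega), h (q + 1) (by omega)]

theorem bU_eq_zero_of_eqOn_id {n : ℕ} {π : ℕ → ℕ} (h : ∀ p ≤ n + 1, π p = p) : bU n π = 0 := by
  rw [bU_congr h, bU, Finset.card_eq_zero, Finset.filter_eq_empty_iff]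
  simp

theorem bU_le_card_of_consecutive_off {n : ℕ} {σ : ℕ → ℕ} {E : Finset ℕ}
    (h : ∀ q ≤ n, q ∉ E → Consecutive (σ q) (σ (q + 1))) : bU n σ ≤ E.card := by
  refine Finset.card_le_card fun q hq => ?_
  rw [Finset.mem_filter, Finset.mem_range] at hq
  by_contra hqE
  exact hq.2 (h q (by omega) hqE)

theorem bU_le_bU_comp_add {n : ℕ} (π σ : ℕ → ℕ) (hmaps : ∀ p ≤ n + 1, σ p ≤ n + 1)
    (hinj : ∀ p ≤ n + 1, ∀ p' ≤ n + 1, σ p = σ p' → p = p') :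
    bU n π ≤ bU n (π ∘ σ) + bU n σ := by
  have hinter : ((adjU n (π ∘ σ)).filter fun q => Consecutive (σ q) (σ (q + 1))).card ≤
      (adjU n π).card := by
    refine Finset.card_le_card_of_injOn (fun q => min (σ q) (σ (q + 1))) ?_ ?_
    · intro q hq
      simp only [adjU, Finset.coe_filter, Finset.mem_filter, Finset.mem_range, Set.mem_ofPred_eq,
        Function.comp_apply] at hq ⊢
      obtain ⟨⟨hqn, hπq⟩, hσq⟩ := hq
      have := hmaps q (by omega)
      have := hmaps (q + 1) (by omega)
      rcases hσq with h | h
      · rw [h] at hπq ⊢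
        exact ⟨by omega, by rwa [min_eq_left (by omega)]⟩
      · rw [h] at hπq ⊢
        exact ⟨by omega, by rw [min_eq_right (by omega)]; exact hπq.symm⟩
    · intro q hq r hr hqr
      simp only [adjU, Finset.coe_filter, Finset.mem_filter, Finset.mem_range,
        Set.mem_ofPred_eq] at hq hr hqr
      have := hinj q (by omega) r (by omega)
      have := hinj q (by omega) (r + 1) (by omega)
      have := hinj (q + 1) (by omega) r (by omega)
      have := hinj (q + 1) (by omega) (r + 1) (by omega)
      omega
  have hsplit := Finset.card_filter_add_card_filter_not (s := adjU n (π ∘ σ))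
    (fun q => Consecutive (σ q) (σ (q + 1)))
  have hrest : ((adjU n (π ∘ σ)).filter fun q => ¬ Consecutive (σ q) (σ (q + 1))).card ≤
      bU n σ :=
    Finset.card_le_card (Finset.monotone_filter_left _ (Finset.filter_subset _ _))
  have := card_adjU_add_bU n π
  have := card_adjU_add_bU n (π ∘ σ)
  omega

theorem bU_le_add_card_of_eqOn_comp {n : ℕ} {π π' σ : ℕ → ℕ} (E : Finset ℕ)
    (hπ' : ∀ p ≤ n + 1, π' p = π (σ p)) (hmaps : ∀ p ≤ n + 1, σ p ≤ n + 1)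
    (hinj : ∀ p ≤ n + 1, ∀ p' ≤ n + 1, σ p = σ p' → p = p')
    (hσ : ∀ q ≤ n, q ∉ E → Consecutive (σ q) (σ (q + 1))) :
    bU n π ≤ bU n π' + E.card := by
  rw [bU_congr (π' := π ∘ σ) hπ']
  exact (bU_le_bU_comp_add π σ hmaps hinj).trans
    (Nat.add_le_add_left (bU_le_card_of_consecutive_off hσ) _)

theorem bU_le_of_URev {n : ℕ} {π π' : ℕ → ℕ} (h : URev n π π') : bU n π ≤ bU n π' + 2 := by
  obtain ⟨i, j, hi, hij, hj, hin, hout⟩ := h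
  refine (bU_le_add_card_of_eqOn_comp (σ := fun p => if i ≤ p ∧ p ≤ j then i + j - p else p)
    {i - 1, j} ?_ ?_ ?_ ?_).trans (Nat.add_le_add_left Finset.card_le_two _)
  · intro p hp
    split_ifs with hp'
    · exact hin p hp'.1 hp'.2
    · exact hout p (by omega)
  · intro p hp
    split_ifs <;> omega
  · intro p hp p' hp' h
    split_ifs at h <;> omega
  · intro q hq hqE
    simp only [Finset.mem_insert, Finset.mem_singleton] at hqE
    split_ifs <;> omega

theorem bU_le_of_UTransp {n : ℕ} {π π' : ℕ → ℕ} (h : UTransp n π π') :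
    bU n π ≤ bU n π' + 3 := by
  obtain ⟨i, j, k, hi, hij, hjk, hk, hA, hB, hout⟩ := h
  refine (bU_le_add_card_of_eqOn_comp (σ := fun p => if i ≤ p ∧ p < i + (k - j) then p + (j - i)
      else if i + (k - j) ≤ p ∧ p < k then p - (k - j) else p)
    {i - 1, i + (k - j) - 1, k - 1} ?_ ?_ ?_ ?_).trans (Nat.add_le_add_left Finset.card_le_three _)
  · intro p hp
    split_ifs with hpA hpB
    · exact hA p hpA.1 hpA.2
    · exact hB p hpB.1 hpB.2
    · exact hout p (by omega)
  · intro p hp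
    split_ifs <;> omega
  · intro p hp p' hp' h
    split_ifs at h <;> omega
  · intro q hq hqE
    simp only [Finset.mem_insert, Finset.mem_singleton] at hqE
    split_ifs <;> omega

theorem bU_le_of_UInvTransp {n : ℕ} {π π' : ℕ → ℕ} (h : UInvTransp n π π') :
    bU n π ≤ bU n π' + 3 := by
  obtain ⟨i, j, k, hi, hij, hjk, hk, ⟨hA, hB⟩ | ⟨hA, hB⟩, hout⟩ := h
  · refine (bU_le_add_card_of_eqOn_comp
      (σ := fun p => if i ≤ p ∧ p < i + (k - j) then p + (j - i)
        else if i + (k - j) ≤ p ∧ p < k then i + k - 1 - p else p)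
      {i - 1, i + (k - j) - 1, k - 1} ?_ ?_ ?_ ?_).trans
      (Nat.add_le_add_left Finset.card_le_three _)
    · intro p hp
      split_ifs with hpA hpB
      · exact hA p hpA.1 hpA.2
      · exact hB p hpB.1 hpB.2
      · exact hout p (by omega)
    · intro p hp
      split_ifs <;> omega
    · intro p hp p' hp' h
      split_ifs at h <;> omega
    · intro q hq hqE
      simp only [Finset.mem_insert, Finset.mem_singleton] at hqE
      split_ifs <;> omega
  · refine (bU_le_add_card_of_eqOn_comp
      (σ := fun p => if i ≤ p ∧ p < i + (k - j) then i + k - 1 - p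
        else if i + (k - j) ≤ p ∧ p < k then p - (k - j) else p)
      {i - 1, i + (k - j) - 1, k - 1} ?_ ?_ ?_ ?_).trans
      (Nat.add_le_add_left Finset.card_le_three _)
    · intro p hp
      split_ifs with hpA hpB
      · exact hA p hpA.1 hpA.2
      · exact hB p hpB.1 hpB.2
      · exact hout p (by omega)
    · intro p hp
      split_ifs <;> omega
    · intro p hp p' hp' h
      split_ifs at h <;> omega
    · intro q hq hqE
      simp only [Finset.mem_insert, Finset.mem_singleton] at hqE
      split_ifs <;> omega

theorem bU_le_of_URevRev {n : ℕ} {π π' : ℕ → ℕ} (h : URevRev n π π') :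
    bU n π ≤ bU n π' + 3 := by
  obtain ⟨i, j, k, hi, hij, hjk, hk, hA, hB, hout⟩ := h
  refine (bU_le_add_card_of_eqOn_comp (σ := fun p => if i ≤ p ∧ p < j then i + j - 1 - p
      else if j ≤ p ∧ p < k then j + k - 1 - p else p)
    {i - 1, j - 1, k - 1} ?_ ?_ ?_ ?_).trans (Nat.add_le_add_left Finset.card_le_three _)
  · intro p hp
    split_ifs with hpA hpB
    · exact hA p hpA.1 hpA.2
    · exact hB p hpB.1 hpB.2
    · exact hout p (by omega)
  · intro p hp
    split_ifs <;> omega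
  · intro p hp p' hp' h
    split_ifs at h <;> omega
  · intro q hq hqE
    simp only [Finset.mem_insert, Finset.mem_singleton] at hqE
    split_ifs <;> omega

def breakpointBound : RearrOp → ℕ
  | RearrOp.rev => 2
  | _ => 3

theorem bU_le_of_uOpRel {n : ℕ} {op : RearrOp} {π π' : ℕ → ℕ} (h : uOpRel n op π π') :
    bU n π ≤ bU n π' + breakpointBound op := by
  cases op with
  | rev => exact bU_le_of_URev h
  | transp => exact bU_le_of_UTransp h
  | invtransp => exact bU_le_of_UInvTransp h
  | revrev => exact bU_le_of_URevRev h

theorem ofReal_mul_breakpointBound_le_opCost {c wr wt : ℝ} (hr : 2 * c ≤ wr) (ht : 3 * c ≤ wt)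
    (op : RearrOp) : ENNReal.ofReal (c * breakpointBound op) ≤ opCost wr wt op := by
  cases op <;> refine ENNReal.ofReal_le_ofReal ?_ <;> simp only [breakpointBound, Nat.cast_ofNat] <;> linarith

theorem ofReal_mul_bU_le_seqCost {n : ℕ} {c wr wt : ℝ} (hc : 0 ≤ c) (hr : 2 * c ≤ wr)
    (ht : 3 * c ≤ wt) : ∀ (l : List RearrOp) (π : ℕ → ℕ), USorts n l π →
      ENNReal.ofReal (c * bU n π) ≤ seqCost wr wt l
  | [], π, h => by simp [bU_eq_zero_of_eqOn_id h]
  | op :: l, π, ⟨π', hop, hl⟩ => by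
    have hstep : (bU n π : ℝ) ≤ bU n π' + breakpointBound op := by
      exact_mod_cast bU_le_of_uOpRel hop
    calc ENNReal.ofReal (c * bU n π)
        ≤ ENNReal.ofReal (c * bU n π' + c * breakpointBound op) :=
          ENNReal.ofReal_le_ofReal (by rw [← mul_add]; exact mul_le_mul_of_nonneg_left hstep hc)
      _ ≤ ENNReal.ofReal (c * bU n π') + ENNReal.ofReal (c * breakpointBound op) :=
          ENNReal.ofReal_add_le
      _ ≤ seqCost wr wt l + opCost wr wt op :=
          add_le_add (ofReal_mul_bU_le_seqCost hc hr ht l π' hl)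
            (ofReal_mul_breakpointBound_le_opCost hr ht op)
      _ = seqCost wr wt (op :: l) := by simp [seqCost, add_comm]

theorem weighted_unsigned_breakpoint_lower_bound_general
    (n : ℕ) (π : ℕ → ℕ)
    (wr wt : ℝ) (hwr : 0 < wr) (hwt : 0 < wt)
    (M : Set RearrOp) :
    ENNReal.ofReal (min (wr / 2) (wt / 3) * (bU n π : ℝ)) ≤ uWDist n M wr wt π := by
  refine le_sInf ?_
  rintro _ ⟨l, -, hl, rfl⟩
  exact ofReal_mul_bU_le_seqCost (le_min (by positivity) (by positivity))
    (by linarith [min_le_left (wr / 2) (wt / 3)]) (by linarith [min_le_right (wr / 2) (wt / 3)])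
    l π hl

/-- For every unsigned permutation `π` of size `n`, all positive weights
`w_ρ` and `w_τ`, and every rearrangement model `M ∈ {M1, …, M6}` (with unsigned
operations), the weighted sorting distance satisfies
`d^w_M(π) ≥ min{w_ρ/2, w_τ/3} · b(π)`, where `b(π)` is the number of unsigned-reversal
breakpoints of `π`. -/
theorem weighted_unsigned_breakpoint_lower_bound
    (n : ℕ) (π : ℕ → ℕ) (hπ : IsUPerm n π)
    (wr wt : ℝ) (hwr : 0 < wr) (hwt : 0 < wt)
    (M : Set RearrOp)
    (hM : M = M1 ∨ M = M2 ∨ M = M3 ∨ M = M4 ∨ M = M5 ∨ M = M6) :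
    ENNReal.ofReal (min (wr / 2) (wt / 3) * (bU n π : ℝ)) ≤ uWDist n M wr wt π :=
  weighted_unsigned_breakpoint_lower_bound_general n π wr wt hwr hwt M
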